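/- Let n be a positive integer with s₂(n) ≥ 2, s₂(n+1) ≥ s₂(n), and ν(n) > 0. Then the maximum of k + ℓ over pairs of integers 0 ≤ k, ℓ ≤ n + 1 such that 2^(s₂(n)−1) does not divide C(k+ℓ, k) equals 2n − 2^(ν(n)+1) − 1. -/

import Mathlib

/-- binary digit sum -/
def s2 (n : ℕ) : ℕ := (Nat.digits 2 n).sum

/-- 2-adic valuation -/
def nu (n : ℕ) : ℕ := padicValNat 2 n

/-!
Write `n = 2 ^ v * (2 * c + 1)` with `v ≥ 1`, so that `s₂(n) = s₂(c) + 1`, and read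
`ν(C(k + ℓ, k))` as the number of carries in the binary addition `k + ℓ` (Kummer).
For `x = 2 ^ (v + 1) * c`, the pair `(x - 1, x)` has exactly `s₂(x) - 1 = s₂(c) - 1` carries
and sum `2n - 2 ^ (v + 1) - 1`. If instead `k + ℓ ≥ 2x` with `k, ℓ ≤ n + 1`, then
`⌊k / 2 ^ (v + 2)⌋, ⌊ℓ / 2 ^ (v + 2)⌋ ≤ ⌊c / 2⌋` while `⌊(k + ℓ) / 2 ^ (v + 2)⌋ ≥ c`, so every set
bit `s` of `c` produces a carry into position `v + 2 + s`: at least `s₂(c)` carries.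
-/

lemma s2_zero : s2 0 = 0 := by simp [s2]

lemma s2_two_pow_mul (k n : ℕ) : s2 (2 ^ k * n) = s2 n := by
  rcases Nat.eq_zero_or_pos n with rfl | hn
  · simp
  · simp [s2, Nat.digits_base_pow_mul one_lt_two hn]

lemma s2_two_mul (n : ℕ) : s2 (2 * n) = s2 n := by
  simpa using s2_two_pow_mul 1 n

lemma s2_two_mul_add_one (n : ℕ) : s2 (2 * n + 1) = s2 n + 1 := by
  rw [s2, Nat.digits_def' one_lt_two (by omega), s2]
  simp only [List.sum_cons]
  rw [show (2 * n + 1) % 2 = 1 by omega, show (2 * n + 1) / 2 = n by omega, add_comm]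

lemma s2_eq_length_bitIndices (n : ℕ) : s2 n = n.bitIndices.length := by
  induction n using Nat.strong_induction_on with
  | _ n ih =>
    rcases Nat.even_or_odd' n with ⟨m, rfl | rfl⟩
    · rcases Nat.eq_zero_or_pos m with rfl | hm
      · simp [s2_zero]
      · simp [s2_two_mul, ih m (by omega)]
    · simp [s2_two_mul_add_one, ih m (by omega)]

lemma padicValNat_choose_add (k ℓ : ℕ) :
    padicValNat 2 ((k + ℓ).choose k) = s2 k + s2 ℓ - s2 (k + ℓ) := by
  have := sub_one_mul_padicValNat_choose_eq_sub_sum_digits' (p := 2) (k := k) (n := ℓ)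
  rw [add_comm ℓ k] at this
  simpa [s2, add_comm (s2 k)] using this

lemma padicValNat_choose_pred_add_self {x : ℕ} (hx : 0 < x) :
    padicValNat 2 ((x - 1 + x).choose (x - 1)) = s2 x - 1 := by
  have h : s2 (x - 1 + x) = s2 (x - 1) + 1 := by
    rw [show x - 1 + x = 2 * (x - 1) + 1 by omega, s2_two_mul_add_one]
  rw [padicValNat_choose_add, h]
  omega

lemma s2_le_padicValNat_choose {k ℓ c j : ℕ} (hj : 0 < j) (hk : k / 2 ^ j ≤ c / 2)
    (hℓ : ℓ / 2 ^ j ≤ c / 2) (hc : c ≤ (k + ℓ) / 2 ^ j) :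
    s2 c ≤ padicValNat 2 ((k + ℓ).choose k) := by
  have carry {s : ℕ} (hs : c.testBit s) :
      j + s ∈ {i ∈ Finset.Ico 1 (Nat.log 2 (k + ℓ) + 1) | 2 ^ i ≤ k % 2 ^ i + ℓ % 2 ^ i} := by
    have hbit : c / 2 ^ s % 2 = 1 := by simpa [Nat.testBit_eq_decide_div_mod_eq] using hs
    have hcj : c * 2 ^ j ≤ k + ℓ := (Nat.le_div_iff_mul_le (by positivity)).mp hc
    have hpow : 2 ^ (j + s) ≤ k + ℓ := by
      rw [pow_add, mul_comm]
      exact (Nat.mul_le_mul_right _ (Nat.two_pow_le_of_mem_bitIndices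
        (Nat.mem_bitIndices.mpr hs))).trans hcj
    have hdiv (m : ℕ) : m / 2 ^ (j + s) = m / 2 ^ j / 2 ^ s := by
      rw [Nat.div_div_eq_div_mul, pow_add]
    have hhalf : c / 2 / 2 ^ s = c / 2 ^ s / 2 := by
      rw [Nat.div_div_eq_div_mul, Nat.div_div_eq_div_mul, mul_comm]
    have hk' := Nat.div_le_div_right (c := 2 ^ s) hk
    have hℓ' := Nat.div_le_div_right (c := 2 ^ s) hℓ
    have hc' := Nat.div_le_div_right (c := 2 ^ s) hc
    have hsum := Nat.add_div (a := k) (b := ℓ) (Nat.two_pow_pos (j + s))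
    simp only [Finset.mem_filter, Finset.mem_Ico]
    refine ⟨⟨by omega, Nat.lt_succ_of_le (Nat.le_log_of_pow_le one_lt_two hpow)⟩, ?_⟩
    by_contra hno
    rw [if_neg hno, hdiv, hdiv, hdiv] at hsum
    omega
  calc s2 c = (c.bitIndices.toFinset.map (addLeftEmbedding j)).card := by
        rw [s2_eq_length_bitIndices, Finset.card_map,
          List.toFinset_card_of_nodup Nat.bitIndices_nodup]
    _ ≤ _ := Finset.card_le_card fun i hi => by
        obtain ⟨s, hs, rfl⟩ := Finset.mem_map.mp hi
        exact carry (Nat.mem_bitIndices.mp (List.mem_toFinset.mp hs))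
    _ = padicValNat 2 ((k + ℓ).choose k) := by
        rw [add_comm k ℓ, padicValNat_choose' (p := 2) (lt_add_one _), add_comm ℓ k]

lemma exists_eq_two_pow_nu_mul {n : ℕ} (hn : n ≠ 0) : ∃ c, n = 2 ^ nu n * (2 * c + 1) := by
  obtain ⟨k, _, ⟨c, rfl⟩, rfl⟩ := Nat.exists_eq_two_pow_mul_odd hn
  refine ⟨c, ?_⟩
  rw [nu, padicValNat.mul (by positivity) (by omega), padicValNat.prime_pow,
    padicValNat.eq_zero_of_not_dvd (by omega), add_zero]

lemma s2_le_padicValNat_choose_of_bounds {v c k ℓ : ℕ} (hv : 0 < v)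
    (hk : k ≤ 2 ^ v * (2 * c + 1) + 1) (hℓ : ℓ ≤ 2 ^ v * (2 * c + 1) + 1)
    (hkℓ : 2 ^ (v + 2) * c ≤ k + ℓ) :
    s2 c ≤ padicValNat 2 ((k + ℓ).choose k) := by
  have hbound : 2 ^ v * (2 * c + 1) + 1 < (c / 2 + 1) * 2 ^ (v + 2) := by
    have hP : 2 ≤ 2 ^ v := Nat.le_self_pow hv.ne' 2
    have := Nat.div_add_mod c 2
    have := Nat.mod_lt c two_pos
    rw [pow_add]
    nlinarith
  have hquot {m : ℕ} (hm : m ≤ 2 ^ v * (2 * c + 1) + 1) : m / 2 ^ (v + 2) ≤ c / 2 :=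
    Nat.lt_add_one_iff.mp ((Nat.div_lt_iff_lt_mul (by positivity)).mpr (hm.trans_lt hbound))
  exact s2_le_padicValNat_choose (by omega) (hquot hk) (hquot hℓ)
    ((Nat.le_div_iff_mul_le (by positivity)).mpr (by rwa [mul_comm]))

theorem stmt7_general (n : ℕ) (hs : 2 ≤ s2 n)
    (hν : 0 < nu n) :
    IsGreatest {m : ℕ | ∃ k ℓ : ℕ, k ≤ n + 1 ∧ ℓ ≤ n + 1 ∧
        ¬ (2 ^ (s2 n - 1) ∣ Nat.choose (k + ℓ) k) ∧ m = k + ℓ}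
      (2 * n - 2 ^ (nu n + 1) - 1) := by
  have hn : n ≠ 0 := by rintro rfl; simp [nu] at hν
  obtain ⟨c, hnc⟩ := exists_eq_two_pow_nu_mul hn
  generalize nu n = v at hν hnc ⊢
  subst hnc
  rw [s2_two_pow_mul, s2_two_mul_add_one] at hs ⊢
  have hc : 0 < c := Nat.pos_of_ne_zero fun hc => by simp [hc, s2_zero] at hs
  obtain ⟨x, hx⟩ : ∃ x, x = 2 ^ (v + 1) * c := ⟨_, rfl⟩
  have hnx : 2 ^ v * (2 * c + 1) = x + 2 ^ v := by rw [hx, pow_succ]; ring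
  have hpow : 2 ^ (v + 1) = 2 * 2 ^ v := by rw [pow_succ, mul_comm]
  have hxpos : 0 < x := hx ▸ by positivity
  constructor
  · refine ⟨x - 1, x, by omega, by omega, ?_, by omega⟩
    rw [padicValNat_dvd_iff_le (Nat.choose_pos (by omega)).ne',
      padicValNat_choose_pred_add_self hxpos, hx, s2_two_pow_mul]
    omega
  · rintro _ ⟨k, ℓ, hk, hℓ, hndvd, rfl⟩
    by_contra hgt
    refine hndvd ((padicValNat_dvd_iff_le (Nat.choose_pos (Nat.le_add_right k ℓ)).ne').mpr ?_)
    have hx4 : 2 ^ (v + 2) * c = 2 * x := by rw [hx]; ring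
    have := s2_le_padicValNat_choose_of_bounds hν hk hℓ (by omega)
    omega

theorem stmt7 (n : ℕ) (hn : 0 < n) (hs : 2 ≤ s2 n) (hmono : s2 n ≤ s2 (n + 1))
    (hν : 0 < nu n) :
    IsGreatest {m : ℕ | ∃ k ℓ : ℕ, k ≤ n + 1 ∧ ℓ ≤ n + 1 ∧
        ¬ (2 ^ (s2 n - 1) ∣ Nat.choose (k + ℓ) k) ∧ m = k + ℓ}
      (2 * n - 2 ^ (nu n + 1) - 1) :=
  stmt7_general n hs hν
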